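/- For every integer m ≥ 1, the sum ∑_{k=1}^{m-1} cot²(kπ/m) equals (m-1)(m-2)/3. -/

import Mathlib

open Real Finset

private lemma csum_id (n : ℕ) : (∑ j ∈ Finset.range n, (j:ℂ)) * 2 = n^2 - n := by
  induction n with
  | zero => simp
  | succ k ih => rw [Finset.sum_range_succ, add_mul, ih]; push_cast; ring

private lemma csum_sq (n : ℕ) : (∑ j ∈ Finset.range n, (j:ℂ)^2) * 6 = 2*n^3 - 3*n^2 + n := by
  induction n with
  | zero => simp
  | succ k ih => rw [Finset.sum_range_succ, add_mul, ih]; push_cast; ring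

private lemma jx_mul (x : ℂ) (n : ℕ) :
    (∑ j ∈ Finset.range n, (j:ℂ) * x^j) * (x - 1)
      = (n:ℂ) * x^n - x^n + 1 - ∑ j ∈ Finset.range n, x^j := by
  induction n with
  | zero => simp
  | succ k ih =>
    rw [Finset.sum_range_succ, Finset.sum_range_succ (f := fun j => x^j)]
    push_cast
    linear_combination ih

/-- key per-term identity for an `m`-th root of unity `x ≠ 1`. -/
private lemma key_term (m : ℕ) (hm : 1 ≤ m) (x : ℂ) (hxm : x ^ m = 1) (hx1 : x ≠ 1) :
    ((x+1)/(Complex.I*(1-x)))^2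
      = -1 - (4/(m:ℂ)) * (∑ j ∈ Finset.range m, (j:ℂ) * x^j)
        - (4/(m:ℂ)^2) * (∑ j ∈ Finset.range m, (j:ℂ) * x^j)^2 := by
  have hM : (m:ℂ) ≠ 0 := Nat.cast_ne_zero.2 (by omega)
  have hx1' : x - 1 ≠ 0 := sub_ne_zero.2 hx1
  have hgs : ∑ j ∈ Finset.range m, x^j = 0 := by
    rw [geom_sum_eq hx1, hxm]; simp
  have hmul : (∑ j ∈ Finset.range m, (j:ℂ) * x^j) * (x - 1) = m := by
    rw [jx_mul, hxm, hgs]; ring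
  have hS : (∑ j ∈ Finset.range m, (j:ℂ) * x^j) = m / (x - 1) :=
    eq_div_of_mul_eq hx1' hmul
  rw [hS, div_pow, mul_pow, Complex.I_sq]
  have h1x : (1:ℂ) - x ≠ 0 := fun h => hx1 (by linear_combination -h)
  field_simp
  ring

private lemma cot_cast (m : ℕ) (hm : 1 ≤ m) (k : ℕ) :
    ((Real.cot ((k:ℝ) * Real.pi / m) : ℝ) : ℂ)
      = ((Complex.exp (2 * Real.pi * Complex.I / m))^k + 1)
        / (Complex.I * (1 - (Complex.exp (2 * Real.pi * Complex.I / m))^k)) := by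
  rw [Complex.ofReal_cot, Complex.cot_eq_exp_ratio]
  congr 2 <;>
  · rw [← Complex.exp_nat_mul]
    congr 1
    push_cast
    have hM : (m:ℂ) ≠ 0 := Nat.cast_ne_zero.2 (by omega)
    field_simp

private lemma inner_dvd_sum (m : ℕ) (j : ℕ) (hj : j ∈ Finset.range m) (c : ℂ) :
    ∑ l ∈ Finset.range m, (if m ∣ (j+l) then (j:ℂ) * (l:ℂ) * c else 0)
      = (j:ℂ) * ((m - j : ℕ) : ℂ) * c := by
  have hjm : j < m := Finset.mem_range.1 hj
  rcases Nat.eq_zero_or_pos j with rfl | hj1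
  · rw [Finset.sum_eq_zero (fun l _ => by split_ifs <;> simp)]; simp
  · have hsum : j + (m - j) = m := by omega
    rw [Finset.sum_eq_single_of_mem (m - j) (Finset.mem_range.2 (by omega))]
    · rw [if_pos (show m ∣ j + (m - j) by rw [hsum])]
    · intro b hb hne
      rw [if_neg]
      rintro ⟨c', hc'⟩
      have hbm : b < m := Finset.mem_range.1 hb
      have h2 : m * c' < m * 2 := by omega
      have h3 : c' < 2 := Nat.lt_of_mul_lt_mul_left h2
      interval_cases c' <;> omega

private lemma sum_cot_sq_complex (m : ℕ) (hm : 1 ≤ m) :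
    ∑ k ∈ Finset.Ico 1 m, ((Real.cot ((k:ℝ) * Real.pi / m) : ℝ) : ℂ)^2 =
      ((m : ℂ) - 1) * ((m : ℂ) - 2) / 3 := by
  have hM : (m:ℂ) ≠ 0 := Nat.cast_ne_zero.2 (by omega)
  set ω : ℂ := Complex.exp (2 * Real.pi * Complex.I / m) with hωdef
  have hprim : IsPrimitiveRoot ω m := Complex.isPrimitiveRoot_exp m (by omega)
  have hone : ∀ j : ℕ, ω ^ j = 1 ↔ m ∣ j := fun j => hprim.pow_eq_one_iff_dvd j
  have hωm : ω ^ m = 1 := hprim.pow_eq_one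
  -- geometric sum orthogonality over Ico 1 m
  have hgeom : ∀ j : ℕ, ∑ k ∈ Finset.Ico 1 m, (ω^j)^k
      = if m ∣ j then (m:ℂ) - 1 else -1 := by
    intro j
    by_cases hd : m ∣ j
    · rw [if_pos hd, (hone j).2 hd]
      simp [Nat.cast_sub hm]
    · rw [if_neg hd]
      have h1 : ω^j ≠ 1 := fun h => hd ((hone j).1 h)
      have h2 : ∑ k ∈ Finset.range m, (ω^j)^k = 0 := by
        rw [geom_sum_eq h1]
        have : (ω^j)^m = 1 := by rw [← pow_mul, mul_comm, pow_mul, hωm, one_pow]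
        simp [this]
      have h3 : ∑ k ∈ Finset.range m, (ω^j)^k
          = (ω^j)^0 + ∑ k ∈ Finset.Ico 1 m, (ω^j)^k := by
        rw [Finset.range_eq_Ico, Finset.sum_eq_sum_Ico_succ_bot (by omega)]
      rw [h3, pow_zero] at h2
      linear_combination h2
  -- rewrite each term
  have hterm : ∀ k ∈ Finset.Ico 1 m,
      ((Real.cot ((k:ℝ) * Real.pi / m) : ℝ) : ℂ)^2
        = -1 - (4/(m:ℂ)) * (∑ j ∈ Finset.range m, (j:ℂ) * (ω^k)^j)
          - (4/(m:ℂ)^2) * (∑ j ∈ Finset.range m, (j:ℂ) * (ω^k)^j)^2 := by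
    intro k hk
    have hk' := Finset.mem_Ico.1 hk
    have hxm : (ω^k)^m = 1 := by rw [← pow_mul, mul_comm, pow_mul, hωm, one_pow]
    have hx1 : ω^k ≠ 1 := fun h => by
      have hdvd := (hone k).1 h
      exact absurd (Nat.le_of_dvd (by omega) hdvd) (by omega)
    rw [cot_cast m hm k, key_term m hm (ω^k) hxm hx1]
  rw [Finset.sum_congr rfl hterm]
  -- split the sum
  rw [Finset.sum_sub_distrib, Finset.sum_sub_distrib, Finset.sum_const,
    ← Finset.mul_sum, ← Finset.mul_sum]
  -- S1
  have hc : ∀ k : ℕ, ∀ j : ℕ, (ω^k)^j = (ω^j)^k := fun k j => by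
    rw [← pow_mul, mul_comm, pow_mul]
  have hS1 : ∑ k ∈ Finset.Ico 1 m, ∑ j ∈ Finset.range m, (j:ℂ) * (ω^k)^j
      = -(∑ j ∈ Finset.range m, (j:ℂ)) := by
    rw [Finset.sum_comm]
    have step : ∀ j ∈ Finset.range m,
        ∑ k ∈ Finset.Ico 1 m, (j:ℂ) * (ω^k)^j = -((j:ℂ)) := by
      intro j hj
      have hmulsum : ∑ k ∈ Finset.Ico 1 m, (j:ℂ) * (ω^k)^j
          = (j:ℂ) * ∑ k ∈ Finset.Ico 1 m, (ω^j)^k := by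
        rw [Finset.mul_sum]
        exact Finset.sum_congr rfl fun k _ => by rw [hc k j]
      rw [hmulsum, hgeom j]
      have hjm : j < m := Finset.mem_range.1 hj
      by_cases hd : m ∣ j
      · have hj0 : j = 0 := Nat.eq_zero_of_dvd_of_lt hd hjm
        subst hj0; simp
      · rw [if_neg hd]; ring
    rw [Finset.sum_congr rfl step, Finset.sum_neg_distrib]
  -- S2
  have hS2 : ∑ k ∈ Finset.Ico 1 m, (∑ j ∈ Finset.range m, (j:ℂ) * (ω^k)^j)^2
      = (∑ j ∈ Finset.range m, (j:ℂ) * ((m - j : ℕ):ℂ) * m)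
        - (∑ j ∈ Finset.range m, (j:ℂ))^2 := by
    have expand : ∀ k ∈ Finset.Ico 1 m,
        (∑ j ∈ Finset.range m, (j:ℂ) * (ω^k)^j)^2
          = ∑ j ∈ Finset.range m, ∑ l ∈ Finset.range m,
              (j:ℂ) * (l:ℂ) * (ω^(j+l))^k := by
      intro k hk
      rw [sq, Finset.sum_mul_sum]
      refine Finset.sum_congr rfl fun j _ => Finset.sum_congr rfl fun l _ => ?_
      rw [show (ω^(j+l))^k = (ω^k)^(j+l) from (hc k (j+l)).symm, pow_add]
      ring
    rw [Finset.sum_congr rfl expand, Finset.sum_comm]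
    have swap2 : ∀ j ∈ Finset.range m,
        ∑ k ∈ Finset.Ico 1 m, ∑ l ∈ Finset.range m, (j:ℂ) * (l:ℂ) * (ω^(j+l))^k
          = ∑ l ∈ Finset.range m, (j:ℂ) * (l:ℂ) *
              (if m ∣ (j+l) then (m:ℂ) - 1 else -1) := by
      intro j _
      rw [Finset.sum_comm]
      refine Finset.sum_congr rfl fun l _ => ?_
      rw [← hgeom (j+l), Finset.mul_sum]
    rw [Finset.sum_congr rfl swap2]
    have split : ∀ j ∈ Finset.range m,
        ∑ l ∈ Finset.range m, (j:ℂ) * (l:ℂ) * (if m ∣ (j+l) then (m:ℂ) - 1 else -1)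
          = (∑ l ∈ Finset.range m, (if m ∣ (j+l) then (j:ℂ) * (l:ℂ) * m else 0))
            - ∑ l ∈ Finset.range m, (j:ℂ) * (l:ℂ) := by
      intro j _
      rw [← Finset.sum_sub_distrib]
      refine Finset.sum_congr rfl fun l _ => ?_
      split_ifs <;> ring
    rw [Finset.sum_congr rfl split, Finset.sum_sub_distrib]
    congr 1
    · exact Finset.sum_congr rfl fun j hj => inner_dvd_sum m j hj (m:ℂ)
    · rw [sq, Finset.sum_mul_sum]
  rw [hS1, hS2]
  -- numerics
  have hcard : (Finset.Ico 1 m).card = m - 1 := by rw [Nat.card_Ico]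
  rw [hcard]
  have hD : ∑ j ∈ Finset.range m, (j:ℂ) * ((m - j : ℕ):ℂ) * m
      = (m:ℂ)^2 * (∑ j ∈ Finset.range m, (j:ℂ)) - (m:ℂ) * ∑ j ∈ Finset.range m, (j:ℂ)^2 := by
    rw [Finset.mul_sum, Finset.mul_sum, ← Finset.sum_sub_distrib]
    refine Finset.sum_congr rfl fun j hj => ?_
    have hjm : j < m := Finset.mem_range.1 hj
    rw [Nat.cast_sub (le_of_lt hjm)]
    ring
  rw [hD]
  have hP := csum_id m
  have hQ := csum_sq m
  have hmc : ((m - 1 : ℕ) : ℂ) = (m:ℂ) - 1 := by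
    rw [Nat.cast_sub hm]; simp
  rw [nsmul_eq_mul, hmc]
  set P := ∑ j ∈ Finset.range m, (j:ℂ) with hPdef
  set Q := ∑ j ∈ Finset.range m, (j:ℂ)^2 with hQdef
  have hPv : P = ((m:ℂ)^2 - (m:ℂ))/2 := by linear_combination hP/2
  have hQv : Q = (2*(m:ℂ)^3 - 3*(m:ℂ)^2 + (m:ℂ))/6 := by linear_combination hQ/6
  rw [hPv, hQv]
  field_simp
  ring

/-- For every integer `m ≥ 1`, `∑_{k=1}^{m-1} cot²(kπ/m) = (m-1)(m-2)/3`. -/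
theorem sum_cot_sq (m : ℕ) (hm : 1 ≤ m) :
    ∑ k ∈ Finset.Ico 1 m, (Real.cot (k * Real.pi / m)) ^ 2 =
      ((m : ℝ) - 1) * ((m : ℝ) - 2) / 3 := by
  have h := sum_cot_sq_complex m hm
  have h2 : ((∑ k ∈ Finset.Ico 1 m, (Real.cot ((k:ℝ) * Real.pi / m)) ^ 2 : ℝ) : ℂ)
      = (((((m:ℝ) - 1) * ((m:ℝ) - 2) / 3 : ℝ)) : ℂ) := by
    rw [Complex.ofReal_sum]
    simp only [Complex.ofReal_pow]
    rw [h]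
    push_cast
    ring
  exact_mod_cast h2
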